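/- Let ω ∈ {0,1,2}^ℕ be such that i_0(ω), i_1(ω), i_2(ω) and i_0(σω), i_1(σω), i_2(σω) are all finite, and write o(x) for the order of x ∈ Aut(T). Then o(a d_ω a b_ω) = o(a b_ω a d_ω), and this common order equals o(a d_{σω}) if ω_1 = 0, equals max{o(a d_{σω}), o(a b_{σω})} if ω_1 = 1, and equals o(a b_{σω}) if ω_1 = 2. -/

import Mathlib

namespace Grig

/-- Sequences ω ∈ {0,1,2}^ℕ (0-indexed: `ω n` is the paper's ω_{n+1}). -/
abbrev Seq := ℕ → Fin 3

/-- The shifted sequence σω. -/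
def shift (ω : Seq) : Seq := fun n => ω (n + 1)

/-- The n-fold shifted sequence σⁿω. -/
def shiftn (n : ℕ) (ω : Seq) : Seq := fun m => ω (m + n)

/-- The rooted automorphism `a`, as a map on words over {0,1} (encoded as `List Bool`). -/
def aMap : List Bool → List Bool
  | [] => []
  | x :: w => (!x) :: w

lemma aMap_invol : ∀ w, aMap (aMap w) = w := by
  intro w; cases w <;> simp [aMap]

/-- The rooted automorphism `a`. -/
def aPerm : Equiv.Perm (List Bool) := ⟨aMap, aMap, aMap_invol, aMap_invol⟩

/-- The directed automorphism with "trivial tag" `k` of the Grigorchuk group `G_ω`: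
`k = 2` gives `b_ω`, `k = 1` gives `c_ω`, `k = 0` gives `d_ω`.  Its section at the
vertex 1 is the corresponding automorphism for σω, and its section at the vertex 0
is `a` if ω₁ ≠ k and trivial if ω₁ = k. -/
def genMap (k : Fin 3) : Seq → List Bool → List Bool
  | _, [] => []
  | ω, false :: w => false :: (if ω 0 = k then w else aMap w)
  | ω, true :: w => true :: genMap k (shift ω) w

lemma genMap_invol (k : Fin 3) : ∀ (w : List Bool) (ω : Seq), genMap k ω (genMap k ω w) = w := by
  intro w
  induction w with
  | nil => intro ω; rfl
  | cons x w ih =>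
      intro ω
      cases x with
      | false => by_cases h : ω 0 = k <;> simp [genMap, h, aMap_invol]
      | true => simp [genMap, ih]

def genPerm (k : Fin 3) (ω : Seq) : Equiv.Perm (List Bool) :=
  ⟨genMap k ω, genMap k ω, fun w => genMap_invol k w ω, fun w => genMap_invol k w ω⟩

/-- The generator `b_ω`. -/
def b (ω : Seq) : Equiv.Perm (List Bool) := genPerm 2 ω
/-- The generator `c_ω`. -/
def c (ω : Seq) : Equiv.Perm (List Bool) := genPerm 1 ω
/-- The generator `d_ω`. -/
def d (ω : Seq) : Equiv.Perm (List Bool) := genPerm 0 ω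

/-- The Grigorchuk group `G_ω = ⟨a, b_ω, c_ω, d_ω⟩`, as a subgroup of the group of
permutations of the vertices of the binary rooted tree.  (Every generator preserves
word length and prefixes, so `G_ω` consists of automorphisms of the tree.) -/
def G (ω : Seq) : Subgroup (Equiv.Perm (List Bool)) :=
  Subgroup.closure {aPerm, b ω, c ω, d ω}

lemma aPerm_mem (ω : Seq) : aPerm ∈ G ω := Subgroup.subset_closure (by simp)
lemma b_mem (ω : Seq) : b ω ∈ G ω := Subgroup.subset_closure (by simp)
lemma c_mem (ω : Seq) : c ω ∈ G ω := Subgroup.subset_closure (by simp)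
lemma d_mem (ω : Seq) : d ω ∈ G ω := Subgroup.subset_closure (by simp)

/-- `a` as an element of `G_ω`. -/
def aSub (ω : Seq) : ↥(G ω) := ⟨aPerm, aPerm_mem ω⟩
/-- `b_ω` as an element of `G_ω`. -/
def bSub (ω : Seq) : ↥(G ω) := ⟨b ω, b_mem ω⟩
/-- `c_ω` as an element of `G_ω`. -/
def cSub (ω : Seq) : ↥(G ω) := ⟨c ω, c_mem ω⟩
/-- `d_ω` as an element of `G_ω`. -/
def dSub (ω : Seq) : ↥(G ω) := ⟨d ω, d_mem ω⟩

/-- The subgroup of permutations of the tree fixing every vertex of level `n`. -/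
def levelStab (n : ℕ) : Subgroup (Equiv.Perm (List Bool)) where
  carrier := {f | ∀ w : List Bool, w.length = n → f w = w}
  one_mem' := by intro w _; rfl
  mul_mem' := by
    intro f g hf hg w hw
    rw [Equiv.Perm.mul_apply, hg w hw, hf w hw]
  inv_mem' := by
    intro f hf w hw
    calc f⁻¹ w = f⁻¹ (f w) := by rw [hf w hw]
    _ = w := f.symm_apply_apply w

/-- The `n`-th level stabiliser `St_{G_ω}(n)` (as a subgroup of the ambient
permutation group). -/
def St (ω : Seq) (n : ℕ) : Subgroup (Equiv.Perm (List Bool)) := G ω ⊓ levelStab n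

/-- The `n`-th level stabiliser `St_{G_ω}(n)` seen as a subgroup of `G_ω`. -/
def stab (ω : Seq) (n : ℕ) : Subgroup ↥(G ω) := (levelStab n).subgroupOf (G ω)

lemma aMap_length (w : List Bool) : (aMap w).length = w.length := by
  cases w <;> simp [aMap]

lemma genMap_length (k : Fin 3) :
    ∀ (w : List Bool) (ω : Seq), (genMap k ω w).length = w.length := by
  intro w
  induction w with
  | nil => intro ω; rfl
  | cons x w ih =>
      intro ω
      cases x with
      | false => by_cases h : ω 0 = k <;> simp [genMap, h, aMap_length]
      | true => simp [genMap, ih]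

/-- The subgroup of length-preserving permutations of the set of words. -/
def lenPres : Subgroup (Equiv.Perm (List Bool)) where
  carrier := {f | ∀ w : List Bool, (f w).length = w.length}
  one_mem' := by intro w; rfl
  mul_mem' := by
    intro f g hf hg w
    rw [Equiv.Perm.mul_apply, hf, hg]
  inv_mem' := by
    intro f hf w
    conv_rhs => rw [← (show f (f⁻¹ w) = w from f.apply_symm_apply w)]
    rw [hf]

lemma G_le_lenPres (ω : Seq) : G ω ≤ lenPres := by
  rw [G]
  refine (Subgroup.closure_le _).2 ?_
  intro x hx
  simp only [Set.mem_insert_iff, Set.mem_singleton_iff] at hx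
  rcases hx with rfl | rfl | rfl | rfl
  · exact fun w => aMap_length w
  · exact fun w => genMap_length 2 w ω
  · exact fun w => genMap_length 1 w ω
  · exact fun w => genMap_length 0 w ω

instance stab_normal (ω : Seq) (n : ℕ) : (stab ω n).Normal := by
  constructor
  intro h hh g
  simp only [stab, Subgroup.mem_subgroupOf] at hh ⊢
  intro w hw
  have hginv : ((g : Equiv.Perm (List Bool))⁻¹ w).length = n := by
    rw [G_le_lenPres ω ((G ω).inv_mem g.2) w, hw]
  have : ((h : Equiv.Perm (List Bool))) ((g : Equiv.Perm (List Bool))⁻¹ w)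
      = (g : Equiv.Perm (List Bool))⁻¹ w := hh _ hginv
  simp only [Subgroup.coe_mul, InvMemClass.coe_inv, Equiv.Perm.mul_apply]
  rw [this]; exact (g : Equiv.Perm (List Bool)).apply_symm_apply w

/-- A (spherical) system of generators of a group. -/
def SphericalSystem {Q : Type*} [Group Q] {r : ℕ} (T : Fin r → Q) : Prop :=
  3 ≤ r ∧ (∀ i, T i ≠ 1) ∧ Subgroup.closure (Set.range T) = ⊤ ∧ (List.ofFn T).prod = 1

/-- The set Σ(T): the union of all conjugates of the cyclic subgroups generated by
the entries of `T`. -/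
def SigmaSet {Q : Type*} [Group Q] {r : ℕ} (T : Fin r → Q) : Set Q :=
  ⋃ (g : Q) (i : Fin r), (fun x => g⁻¹ * x * g) '' (Subgroup.zpowers (T i) : Set Q)

/-- An (unmixed) ramification structure of size `(r₁, r₂)` for a group `Q`. -/
def HasRamificationStructure (Q : Type*) [Group Q] (r₁ r₂ : ℕ) : Prop :=
  ∃ (T₁ : Fin r₁ → Q) (T₂ : Fin r₂ → Q),
    SphericalSystem T₁ ∧ SphericalSystem T₂ ∧ SigmaSet T₁ ∩ SigmaSet T₂ = {1}

/-- `i_k(ω) = min {n ≥ 1 : ω_n = k}` (meaningful when some entry of ω equals `k`;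
with our 0-indexing this is `sInf {n | ω n = k} + 1`). -/
noncomputable def ikFin (k : Fin 3) (ω : Seq) : ℕ := sInf {n | ω n = k} + 1

/-- `m(ω) = max {n ≥ 1 : ω_1 = ⋯ = ω_n}` for a non-constant sequence ω;
with our 0-indexing this is the least index where ω differs from ω 0. -/
noncomputable def mval (ω : Seq) : ℕ := sInf {n | ω n ≠ ω 0}


/-- The normal closure of the element `x` relative to the subgroup `H`:
the subgroup generated by all `H`-conjugates of `x`. -/
def nclIn (H : Subgroup (Equiv.Perm (List Bool))) (x : Equiv.Perm (List Bool)) :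
    Subgroup (Equiv.Perm (List Bool)) :=
  Subgroup.closure {y | ∃ g ∈ H, y = g * x * g⁻¹}

/-- The `d`-generator of `G_ω`: `d_ω` if ω₁ = 0, `c_ω` if ω₁ = 1 and `b_ω` if ω₁ = 2;
with our encoding this is simply `genPerm (ω 0) ω`. -/
def dGenPerm (ω : Seq) : Equiv.Perm (List Bool) := genPerm (ω 0) ω

/-- The subgroup of permutations fixing every word that does not have `u` as a prefix. -/
def awayStab (u : List Bool) : Subgroup (Equiv.Perm (List Bool)) where
  carrier := {f | ∀ w : List Bool, ¬ u <+: w → f w = w}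
  one_mem' := by intro w _; rfl
  mul_mem' := by
    intro f g hf hg w hw
    rw [Equiv.Perm.mul_apply, hg w hw, hf w hw]
  inv_mem' := by
    intro f hf w hw
    calc f⁻¹ w = f⁻¹ (f w) := by rw [hf w hw]
    _ = w := f.symm_apply_apply w

/-- The rigid vertex stabiliser `Rist_{G_ω}(u)`. -/
def Rist (ω : Seq) (u : List Bool) : Subgroup (Equiv.Perm (List Bool)) :=
  G ω ⊓ awayStab u

/-- The section map φ_u : for an automorphism `f` fixing the vertex `u`, the value
`sectionFun u f` is the section of `f` at `u` (as a map on words). -/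
def sectionFun (u : List Bool) (f : Equiv.Perm (List Bool)) : List Bool → List Bool :=
  fun v => (f (u ++ v)).drop u.length

/-- The `d`-generator `x_ω` of `G_ω`, as an element of `G_ω`. -/
def xGen (ω : Seq) : ↥(G ω) :=
  if ω 0 = 0 then ⟨d ω, Subgroup.subset_closure (by simp)⟩
  else if ω 0 = 1 then ⟨c ω, Subgroup.subset_closure (by simp)⟩
  else ⟨b ω, Subgroup.subset_closure (by simp)⟩

/-- The `c`-generator `y_ω` of `G_ω` (determined by ω_{m(ω)+1}), as an element of `G_ω`. -/
noncomputable def yGen (ω : Seq) : ↥(G ω) :=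
  if ω (mval ω) = 0 then ⟨d ω, Subgroup.subset_closure (by simp)⟩
  else if ω (mval ω) = 1 then ⟨c ω, Subgroup.subset_closure (by simp)⟩
  else ⟨b ω, Subgroup.subset_closure (by simp)⟩

open scoped Classical in
/-- The bound `M` of the main theorem. -/
noncomputable def Mval (ω : Seq) : ℕ :=
  if ∀ k : Fin 3, ∃ n, shift ω n = k then
    (Finset.univ.sup fun k : Fin 3 => ikFin k (shift ω)) + 4
  else if ∀ n, shift ω n = shift ω 0 then 4
  else ((Finset.univ.filter fun k : Fin 3 => ∃ n, shift ω n = k).sup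
          fun k => ikFin k (shift ω)) + 4


end Grig

namespace Grig

lemma orderOf_mul_comm' {G : Type*} [Group G] (u v : G) :
    orderOf (u * v) = orderOf (v * u) :=
  (SemiconjBy.orderOf_eq u (show u * (v * u) = (u * v) * u from (mul_assoc u v u).symm)).symm

def pairMap (p q : List Bool → List Bool) : List Bool → List Bool
  | [] => []
  | false :: w => false :: p w
  | true :: w => true :: q w

def pairPerm (p q : Equiv.Perm (List Bool)) : Equiv.Perm (List Bool) where
  toFun := pairMap p q
  invFun := pairMap p.symm q.symm
  left_inv := by intro w; rcases w with _ | ⟨(_|_), w⟩ <;> simp [pairMap]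
  right_inv := by intro w; rcases w with _ | ⟨(_|_), w⟩ <;> simp [pairMap]

@[simp] lemma pairPerm_apply (p q : Equiv.Perm (List Bool)) (w : List Bool) :
    pairPerm p q w = pairMap p q w := rfl

lemma pairPerm_mul (p q p' q' : Equiv.Perm (List Bool)) :
    pairPerm p q * pairPerm p' q' = pairPerm (p * p') (q * q') := by
  ext w; rcases w with _ | ⟨(_|_), w⟩ <;> simp [pairMap]

@[simp] lemma pairPerm_one : pairPerm 1 1 = 1 := by
  ext w; rcases w with _ | ⟨(_|_), w⟩ <;> simp [pairMap]

lemma pairPerm_pow (p q : Equiv.Perm (List Bool)) (n : ℕ) :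
    (pairPerm p q) ^ n = pairPerm (p ^ n) (q ^ n) := by
  induction n with
  | zero => simp
  | succ n ih => rw [pow_succ, pow_succ, pow_succ, ih, pairPerm_mul]

lemma pairPerm_eq_one_iff (p q : Equiv.Perm (List Bool)) :
    pairPerm p q = 1 ↔ p = 1 ∧ q = 1 := by
  constructor
  · intro h
    constructor
    · refine Equiv.ext fun w => ?_
      have := Equiv.ext_iff.1 h (false :: w)
      simpa [pairMap] using this
    · refine Equiv.ext fun w => ?_
      have := Equiv.ext_iff.1 h (true :: w)
      simpa [pairMap] using this
  · rintro ⟨rfl, rfl⟩; simp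

lemma orderOf_pairPerm (p q : Equiv.Perm (List Bool)) :
    orderOf (pairPerm p q) = Nat.lcm (orderOf p) (orderOf q) := by
  apply Nat.dvd_antisymm
  · rw [orderOf_dvd_iff_pow_eq_one, pairPerm_pow, pairPerm_eq_one_iff]
    constructor <;> rw [← orderOf_dvd_iff_pow_eq_one]
    exacts [Nat.dvd_lcm_left _ _, Nat.dvd_lcm_right _ _]
  · have h := pow_orderOf_eq_one (pairPerm p q)
    rw [pairPerm_pow, pairPerm_eq_one_iff] at h
    exact Nat.lcm_dvd (orderOf_dvd_iff_pow_eq_one.2 h.1) (orderOf_dvd_iff_pow_eq_one.2 h.2)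

def swapMap (p q : List Bool → List Bool) : List Bool → List Bool
  | [] => []
  | false :: w => true :: p w
  | true :: w => false :: q w

def swapPerm (p q : Equiv.Perm (List Bool)) : Equiv.Perm (List Bool) where
  toFun := swapMap p q
  invFun := swapMap q.symm p.symm
  left_inv := by intro w; rcases w with _ | ⟨(_|_), w⟩ <;> simp [swapMap]
  right_inv := by intro w; rcases w with _ | ⟨(_|_), w⟩ <;> simp [swapMap]

@[simp] lemma swapPerm_apply (p q : Equiv.Perm (List Bool)) (w : List Bool) :
    swapPerm p q w = swapMap p q w := rfl

lemma swapPerm_sq (p q : Equiv.Perm (List Bool)) :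
    swapPerm p q ^ 2 = pairPerm (q * p) (p * q) := by
  rw [sq]; ext w; rcases w with _ | ⟨(_|_), w⟩ <;> simp [swapMap, pairMap]

lemma orderOf_swapPerm (p q : Equiv.Perm (List Bool)) :
    orderOf (swapPerm p q) = 2 * orderOf (q * p) := by
  set s := swapPerm p q with hs
  have hodd : ∀ n : ℕ, s ^ (2 * n + 1) ≠ 1 := by
    intro n hn
    have h1 : s ^ (2 * n + 1) = s ^ (2 * n) * s := pow_succ s (2 * n)
    have h2 : (s ^ (2 * n + 1)) [false] = [false] := by rw [hn]; rfl
    rw [h1] at h2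
    have hsf : s [false] = true :: p [] := rfl
    rw [Equiv.Perm.mul_apply, hsf, pow_mul, swapPerm_sq, pairPerm_pow] at h2
    simp [pairMap] at h2
  have hppm : orderOf (p * q) = orderOf (q * p) := orderOf_mul_comm' p q
  apply Nat.dvd_antisymm
  · rw [orderOf_dvd_iff_pow_eq_one, pow_mul, swapPerm_sq, pairPerm_pow, pairPerm_eq_one_iff]
    constructor
    · exact pow_orderOf_eq_one (q * p)
    · rw [← orderOf_dvd_iff_pow_eq_one, hppm]
  · have hdvd : orderOf s ∣ 2 * orderOf (q * p) := by
      rw [orderOf_dvd_iff_pow_eq_one, pow_mul, swapPerm_sq, pairPerm_pow, pairPerm_eq_one_iff]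
      exact ⟨pow_orderOf_eq_one (q * p), by rw [← orderOf_dvd_iff_pow_eq_one, hppm]⟩
    rcases Nat.even_or_odd (orderOf s) with ⟨j, hj⟩ | ⟨j, hj⟩
    · have hsj : s ^ (2 * j) = 1 := by
        rw [← pow_orderOf_eq_one s]; congr 1; omega
      rw [pow_mul, swapPerm_sq, pairPerm_pow, pairPerm_eq_one_iff] at hsj
      have hd : orderOf (q * p) ∣ j := orderOf_dvd_iff_pow_eq_one.2 hsj.1
      have h2j : orderOf s = 2 * j := by omega
      exact h2j ▸ mul_dvd_mul_left 2 hd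
    · exfalso
      exact hodd j (by rw [← hj]; exact pow_orderOf_eq_one s)


lemma gen_decomp (k : Fin 3) (ω : Seq) :
    aPerm * genPerm k ω =
      swapPerm (if ω 0 = k then 1 else aPerm) (genPerm k (shift ω)) := by
  refine Equiv.ext fun w => ?_
  rcases w with _ | ⟨(_|_), w⟩
  · rfl
  · by_cases h : ω 0 = k <;>
      simp [genPerm, genMap, aPerm, aMap, swapMap, Equiv.Perm.mul_apply, h]
  · simp [genPerm, genMap, aPerm, aMap, swapMap, Equiv.Perm.mul_apply]

lemma genPerm_sq (k : Fin 3) (ω : Seq) : genPerm k ω ^ 2 = 1 := by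
  rw [sq]
  refine Equiv.ext fun w => ?_
  exact genMap_invol k w ω

lemma orderOf_gen_dvd_two (k : Fin 3) (ω : Seq) : orderOf (genPerm k ω) ∣ 2 :=
  orderOf_dvd_iff_pow_eq_one.2 (genPerm_sq k ω)

lemma key_ne {k : Fin 3} {ω : Seq} (h : ω 0 ≠ k) :
    orderOf (aPerm * genPerm k ω) = 2 * orderOf (aPerm * genPerm k (shift ω)) := by
  rw [gen_decomp, orderOf_swapPerm, if_neg h, orderOf_mul_comm']

lemma key_eq {k : Fin 3} {ω : Seq} (h : ω 0 = k) :
    orderOf (aPerm * genPerm k ω) = 2 * orderOf (genPerm k (shift ω)) := by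
  rw [gen_decomp, orderOf_swapPerm, if_pos h, mul_one]

lemma pow2_base {k : Fin 3} {ω : Seq} (h : ω 0 = k) :
    ∃ j, 1 ≤ j ∧ orderOf (aPerm * genPerm k ω) = 2 ^ j := by
  rcases (Nat.dvd_prime Nat.prime_two).1 (orderOf_gen_dvd_two k (shift ω)) with h1 | h2
  · exact ⟨1, le_refl 1, by rw [key_eq h, h1]; norm_num⟩
  · exact ⟨2, by norm_num, by rw [key_eq h, h2]; norm_num⟩

lemma pow2 (k : Fin 3) (ω : Seq) (m : ℕ) (hm : ω m = k) :
    ∃ j, 1 ≤ j ∧ orderOf (aPerm * genPerm k ω) = 2 ^ j := by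
  induction m generalizing ω with
  | zero => exact pow2_base hm
  | succ m ih =>
      by_cases h0 : ω 0 = k
      · exact pow2_base h0
      · obtain ⟨j, hj1, hj⟩ := ih (shift ω) hm
        exact ⟨j + 1, by omega, by rw [key_ne h0, hj, pow_succ, mul_comm]⟩

lemma adab_decomp (ω : Seq) :
    aPerm * genPerm 0 ω * aPerm * genPerm 2 ω =
      pairPerm (genPerm 0 (shift ω) * (if ω 0 = 2 then 1 else aPerm))
               ((if ω 0 = 0 then 1 else aPerm) * genPerm 2 (shift ω)) := by
  refine Equiv.ext fun w => ?_
  rcases w with _ | ⟨(_|_), w⟩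
  · rfl
  · by_cases h2 : ω 0 = 2 <;>
      simp [genPerm, genMap, aPerm, aMap, pairMap, Equiv.Perm.mul_apply, h2,
        (by decide : (0 : Fin 3) ≠ 2)]
  · by_cases h0 : ω 0 = 0 <;>
      simp [genPerm, genMap, aPerm, aMap, pairMap, Equiv.Perm.mul_apply, h0,
        (by decide : (2 : Fin 3) ≠ 0)]

/-- If all of `i_0(ω), i_1(ω), i_2(ω), i_0(σω), i_1(σω), i_2(σω)`
are finite, then `o(a d_ω a b_ω) = o(a b_ω a d_ω)`, and this common order equals
`o(a d_{σω})` if ω₁ = 0, `max{o(a d_{σω}), o(a b_{σω})}` if ω₁ = 1, and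
`o(a b_{σω})` if ω₁ = 2. -/
theorem orderOf_adab (ω : Seq) (h : ∀ k : Fin 3, ∃ m, ω m = k)
    (h' : ∀ k : Fin 3, ∃ m, shift ω m = k) :
    orderOf (aPerm * d ω * aPerm * b ω) = orderOf (aPerm * b ω * aPerm * d ω) ∧
    orderOf (aPerm * d ω * aPerm * b ω) =
      if ω 0 = 0 then orderOf (aPerm * d (shift ω))
      else if ω 0 = 1 then
        max (orderOf (aPerm * d (shift ω))) (orderOf (aPerm * b (shift ω)))
      else orderOf (aPerm * b (shift ω)) := by
  obtain ⟨m0, hm0⟩ := h' 0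
  obtain ⟨m2, hm2⟩ := h' 2
  obtain ⟨j, hj1, hjd⟩ := pow2 0 (shift ω) m0 hm0
  obtain ⟨l, hl1, hlb⟩ := pow2 2 (shift ω) m2 hm2
  have h2j : (2 : ℕ) ∣ 2 ^ j := dvd_pow_self 2 (by omega)
  have h2l : (2 : ℕ) ∣ 2 ^ l := dvd_pow_self 2 (by omega)
  constructor
  · rw [show aPerm * d ω * aPerm * b ω = (aPerm * d ω) * (aPerm * b ω) from mul_assoc _ _ _,
        show aPerm * b ω * aPerm * d ω = (aPerm * b ω) * (aPerm * d ω) from mul_assoc _ _ _,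
        orderOf_mul_comm']
  · simp only [d, b]
    rw [adab_decomp, orderOf_pairPerm]
    by_cases h0 : ω 0 = 0
    · rw [if_pos h0, if_neg (show ¬ω 0 = 2 by rw [h0]; decide), if_pos h0, one_mul,
        orderOf_mul_comm' (genPerm 0 (shift ω)) aPerm, hjd]
      exact Nat.dvd_antisymm
        (Nat.lcm_dvd dvd_rfl ((orderOf_gen_dvd_two 2 (shift ω)).trans h2j))
        (Nat.dvd_lcm_left _ _)
    · by_cases h1 : ω 0 = 1
      · rw [if_neg h0, if_pos h1, if_neg (show ¬ω 0 = 2 by rw [h1]; decide), if_neg h0,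
          orderOf_mul_comm' (genPerm 0 (shift ω)) aPerm, hjd, hlb]
        rcases le_total j l with hle | hle
        · rw [Nat.dvd_antisymm (Nat.lcm_dvd (pow_dvd_pow 2 hle) dvd_rfl) (Nat.dvd_lcm_right _ _),
            max_eq_right (Nat.pow_le_pow_right (by norm_num) hle)]
        · rw [Nat.dvd_antisymm (Nat.lcm_dvd dvd_rfl (pow_dvd_pow 2 hle)) (Nat.dvd_lcm_left _ _),
            max_eq_left (Nat.pow_le_pow_right (by norm_num) hle)]
      · have h2 : ω 0 = 2 := by
          have : ∀ t : Fin 3, t ≠ 0 → t ≠ 1 → t = 2 := by decide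
          exact this _ h0 h1
        rw [if_neg h0, if_neg h1, if_pos h2, if_neg h0, mul_one, hlb]
        exact Nat.dvd_antisymm
          (Nat.lcm_dvd ((orderOf_gen_dvd_two 0 (shift ω)).trans h2l) dvd_rfl)
          (Nat.dvd_lcm_right _ _)


end Grig
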